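/- Let p(x) = ∏_{i=1}^n (x − λ_i) with n ≥ 2 and real roots λ_1 ≥ λ_2 ≥ … ≥ λ_n all lying in [0, 1/2]. Let k ≥ 1 be an integer, ε ∈ (0, 1/2], and set ε' = ε/(8·n^{1/k}), δ = ε'/(16·(2e)^k·k), δ' = δ^{k+1}, and α = δ'·ε'²/(2n²). Define g̃_1(y) = (p(y+α) − p(y))/(α·p(y)) and g̃_{k+1}(x) = ((−1)^k/(k!·δ^k)) · Σ_{i=0}^{k} (−1)^i · C(k,i) · g̃_1(x + (k−i)δ), and let g_{k+1}(x) = Σ_{i=1}^n 1/(x − λ_i)^{k+1}. Then for every x ∈ [λ_1 + ε', 1]: |g̃_{k+1}(x) − g_{k+1}(x)| ≤ (1/4)·g_{k+1}(x). -/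

import Mathlib

/-!
Since `p (y + α) / p y = ∏ i, (1 + α / (y - λᵢ))`, the Bernoulli and exponential bounds on this
product show that `g̃₁` is within `n² α / ε'² = δ^{k+1} / 2` of `g₁` on `[λ₁ + ε', ∞)`. The
operator defining `g̃_{k+1}` is `(-1)^k / (k! δ^k)` times the `k`-th forward difference with step
`δ`; it sends `y ↦ 1 / (y - λ)` exactly to `y ↦ 1 / ∏_{j ≤ k} (y - λ + j δ)` and multiplies a
uniform error by at most `2^k / (k! δ^k)`, so `g̃_{k+1}` is within `1/8` of
`∑ᵢ 1 / ∏_{j ≤ k} (x - λᵢ + j δ)`. Each of these terms is within a factor `1 - k (k + 1) δ / ε'`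
of `1 / (x - λᵢ)^{k+1}`, and `g_{k+1}(x) ≥ 1` because `x - λ₁ ≤ 1`, which turns the additive
error into a relative one.
-/

open Finset fwdDiff

theorem one_add_sum_le_prod_one_add {ι : Type*} (s : Finset ι) {f : ι → ℝ}
    (hf : ∀ i, 0 ≤ f i) : 1 + ∑ i ∈ s, f i ≤ ∏ i ∈ s, (1 + f i) := by
  induction s using Finset.cons_induction with
  | empty => simp
  | cons a s ha ih =>
    rw [prod_cons, sum_cons]
    have hs : 0 ≤ ∑ i ∈ s, f i := sum_nonneg fun i _ => hf i
    nlinarith [mul_le_mul_of_nonneg_left ih (add_nonneg zero_le_one (hf a)), hf a]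

theorem abs_prod_one_add_sub_one_sub_sum_le {ι : Type*} (s : Finset ι) {f : ι → ℝ}
    (hf : ∀ i, 0 ≤ f i) (hs : ∑ i ∈ s, f i ≤ 1) :
    |∏ i ∈ s, (1 + f i) - 1 - ∑ i ∈ s, f i| ≤ (∑ i ∈ s, f i) ^ 2 := by
  have hS : 0 ≤ ∑ i ∈ s, f i := sum_nonneg fun i _ => hf i
  have hexp := Real.abs_exp_sub_one_sub_id_le (abs_le.mpr ⟨by linarith, hs⟩)
  have hlow := one_add_sum_le_prod_one_add s hf
  have hup := Real.prod_one_add_le_exp_sum s hf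
  rw [abs_le] at hexp ⊢
  constructor <;> nlinarith

theorem one_sub_sum_le_inv_prod_one_add {ι : Type*} (s : Finset ι) {f : ι → ℝ}
    (hf : ∀ i, 0 ≤ f i) : 1 - ∑ i ∈ s, f i ≤ (∏ i ∈ s, (1 + f i))⁻¹ :=
  calc 1 - ∑ i ∈ s, f i ≤ Real.exp (-∑ i ∈ s, f i) := by
        linarith [Real.add_one_le_exp (-∑ i ∈ s, f i)]
    _ = (Real.exp (∑ i ∈ s, f i))⁻¹ := Real.exp_neg _
    _ ≤ (∏ i ∈ s, (1 + f i))⁻¹ :=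
        inv_anti₀ (prod_pos fun i _ => by linarith [hf i]) (Real.prod_one_add_le_exp_sum s hf)

theorem abs_fwdDiff_div_sub_sum_inv_le {ι : Type*} [Fintype ι] (lam : ι → ℝ) {p : ℝ → ℝ}
    (hp : ∀ y, p y = ∏ i, (y - lam i)) {y r α : ℝ} (hr : 0 < r) (hα : 0 < α)
    (hy : ∀ i, r ≤ y - lam i) (hnα : Fintype.card ι * α ≤ r) :
    |(p (y + α) - p y) / (α * p y) - ∑ i, (y - lam i)⁻¹| ≤ Fintype.card ι ^ 2 * α / r ^ 2 := by
  have hpos : ∀ i, 0 < y - lam i := fun i => hr.trans_le (hy i)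
  set a : ι → ℝ := fun i => α / (y - lam i)
  have ha : ∀ i, 0 ≤ a i := fun i => div_nonneg hα.le (hpos i).le
  have hsum : ∑ i, a i ≤ Fintype.card ι * α / r :=
    calc ∑ i, a i ≤ ∑ _i : ι, α / r :=
          sum_le_sum fun i _ => div_le_div_of_nonneg_left hα.le hr (hy i)
      _ = Fintype.card ι * α / r := by simp [mul_div_assoc]
  have hprod : p (y + α) = p y * ∏ i, (1 + a i) := by
    rw [hp, hp, ← prod_mul_distrib]
    exact prod_congr rfl fun i _ => by simp only [a]; field_simp [(hpos i).ne']; ring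
  have hdiff : (p (y + α) - p y) / (α * p y) - ∑ i, (y - lam i)⁻¹ =
      (∏ i, (1 + a i) - 1 - ∑ i, a i) / α := by
    have hp₀ : p y ≠ 0 := hp y ▸ prod_ne_zero_iff.mpr fun i _ => (hpos i).ne'
    simp only [a, div_eq_mul_inv α, ← mul_sum]
    rw [hprod]
    field_simp
    ring
  rw [hdiff, abs_div, abs_of_pos hα, div_le_iff₀ hα]
  calc |∏ i, (1 + a i) - 1 - ∑ i, a i|
      ≤ (∑ i, a i) ^ 2 :=
        abs_prod_one_add_sub_one_sub_sum_le _ ha (hsum.trans ((div_le_one hr).mpr hnα))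
    _ ≤ (Fintype.card ι * α / r) ^ 2 := pow_le_pow_left₀ (sum_nonneg fun i _ => ha i) hsum 2
    _ = Fintype.card ι ^ 2 * α / r ^ 2 * α := by ring

theorem sum_alternating_choose_mul_shift_eq_fwdDiff_iter {R : Type*} [CommRing R]
    (f : R → R) (h y : R) (k : ℕ) :
    ∑ i ∈ range (k + 1), (-1) ^ i * (k.choose i : R) * f (y + ((k - i : ℕ) : R) * h) =
      (Δ_[h])^[k] f y := by
  rw [fwdDiff_iter_eq_sum_shift, ← sum_range_reflect]
  refine sum_congr rfl fun i hi => ?_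
  have hik : i ≤ k := Nat.lt_succ_iff.mp (mem_range.mp hi)
  rw [Nat.add_sub_cancel, Nat.sub_sub_self hik, Nat.choose_symm hik, zsmul_eq_mul, nsmul_eq_mul]
  push_cast
  ring

theorem abs_fwdDiff_iter_le {M : Type*} [AddCommMonoid M] (f : M → ℝ) (h y : M) (k : ℕ)
    {C : ℝ} (hf : ∀ j ≤ k, |f (y + j • h)| ≤ C) : |(Δ_[h])^[k] f y| ≤ 2 ^ k * C := by
  rw [fwdDiff_iter_eq_sum_shift]
  calc |∑ j ∈ range (k + 1), ((-1 : ℤ) ^ (k - j) * k.choose j) • f (y + j • h)|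
      ≤ ∑ j ∈ range (k + 1), (k.choose j : ℝ) * C := by
        refine (abs_sum_le_sum_abs _ _).trans (sum_le_sum fun j hj => ?_)
        rw [zsmul_eq_mul, abs_mul]
        push_cast
        rw [abs_mul, abs_pow, abs_neg, abs_one, one_pow, one_mul, Nat.abs_cast]
        exact mul_le_mul_of_nonneg_left (hf j (Nat.lt_succ_iff.mp (mem_range.mp hj)))
          (Nat.cast_nonneg _)
    _ = 2 ^ k * C := by
        rw [← sum_mul, ← Nat.cast_sum, Nat.sum_range_choose]
        push_cast
        ring

theorem fwdDiff_iter_inv_sub_const {𝕜 : Type*} [Field 𝕜] (a h : 𝕜) (k : ℕ) {x : 𝕜}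
    (hx : ∀ j ≤ k, x - a + j * h ≠ 0) :
    (Δ_[h])^[k] (fun y => (y - a)⁻¹) x =
      (-1) ^ k * k.factorial * h ^ k * (∏ j ∈ range (k + 1), (x - a + j * h))⁻¹ := by
  induction k generalizing x with
  | zero => simp
  | succ k ih =>
    have hshift : ∀ j : ℕ, x + h - a + j * h = x - a + ((j + 1 : ℕ) : 𝕜) * h := fun j => by
      push_cast; ring
    rw [Function.iterate_succ_apply', fwdDiff, ih fun j hj => by
      rw [hshift]; exact hx (j + 1) (by omega), ih fun j hj => hx j (by omega)]
    simp only [hshift]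
    set P := ∏ j ∈ range (k + 1), (x - a + j * h)
    set Q := ∏ j ∈ range (k + 1), (x - a + ((j + 1 : ℕ) : 𝕜) * h)
    have hR₁ : ∏ j ∈ range (k + 2), (x - a + j * h) = Q * (x - a) := by
      simp [Q, prod_range_succ' _ (k + 1)]
    have hR₂ : ∏ j ∈ range (k + 2), (x - a + j * h) = P * (x - a + (k + 1 : ℕ) * h) :=
      prod_range_succ _ _
    have hP : P ≠ 0 := prod_ne_zero_iff.mpr fun j hj => hx j (by have := mem_range.mp hj; omega)
    have hQ : Q ≠ 0 :=
      prod_ne_zero_iff.mpr fun j hj => hx (j + 1) (by have := mem_range.mp hj; omega)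
    have hxa : x - a ≠ 0 := by simpa using hx 0 (Nat.zero_le _)
    -- the two factorisations of `∏_{j ≤ k+1}` give `1 / Q - 1 / P = -(k + 1) h / ∏_{j ≤ k+1}`
    rw [hR₁, Nat.factorial_succ]
    field_simp
    push_cast at hR₂ ⊢
    linear_combination (-1) ^ k * k.factorial * h ^ k * (hR₂.symm.trans hR₁)

theorem abs_fwdDiff_iter_div_sub_sum_inv_prod_le {ι : Type*} [Fintype ι] (lam : ι → ℝ)
    (f : ℝ → ℝ) {x h E : ℝ} (k : ℕ) (hh : 0 < h) (hx : ∀ i, 0 < x - lam i)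
    (hf : ∀ j ≤ k, |f (x + j * h) - ∑ i, (x + j * h - lam i)⁻¹| ≤ E) :
    |(-1) ^ k / (k.factorial * h ^ k) * (Δ_[h])^[k] f x -
        ∑ i, (∏ j ∈ range (k + 1), (x - lam i + j * h))⁻¹| ≤
      2 ^ k * E / (k.factorial * h ^ k) := by
  set g : ℝ → ℝ := fun y => ∑ i, (y - lam i)⁻¹
  have hexact : (Δ_[h])^[k] g x =
      ∑ i, (-1) ^ k * k.factorial * h ^ k * (∏ j ∈ range (k + 1), (x - lam i + j * h))⁻¹ := by
    rw [show g = ∑ i, fun y => (y - lam i)⁻¹ from (sum_fn _ _).symm,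
      fwdDiff_iter_finsetSum, Finset.sum_apply]
    exact sum_congr rfl fun i _ =>
      fwdDiff_iter_inv_sub_const _ _ _ fun j _ => by have := hx i; positivity
  have herr : |(Δ_[h])^[k] (f - g) x| ≤ 2 ^ k * E :=
    abs_fwdDiff_iter_le _ _ _ _ fun j hj => by simpa [g, nsmul_eq_mul] using hf j hj
  have hc : 0 < (k.factorial : ℝ) * h ^ k := by positivity
  have hunit : (-1) ^ k / ((k.factorial : ℝ) * h ^ k) * ((-1) ^ k * k.factorial * h ^ k) = 1 := by
    field_simp
    rw [← pow_mul, pow_mul', neg_one_sq, one_pow]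
  rw [← sub_add_cancel f g, fwdDiff_iter_add, Pi.add_apply, hexact, ← mul_sum, mul_add,
    ← mul_assoc _ _ (∑ i, _), hunit, one_mul, add_sub_cancel_right, abs_mul, abs_div, abs_pow,
    abs_neg, abs_one, one_pow, abs_of_pos hc, one_div_mul_eq_div]
  exact div_le_div_of_nonneg_right herr hc.le

theorem abs_inv_prod_add_mul_sub_inv_pow_le {u h : ℝ} (k : ℕ) (hu : 0 < u) (hh : 0 ≤ h) :
    |(∏ j ∈ range (k + 1), (u + j * h))⁻¹ - (u ^ (k + 1))⁻¹| ≤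
      (k + 1) * k * h / u * (u ^ (k + 1))⁻¹ := by
  set a : ℕ → ℝ := fun j => j * h / u
  have ha : ∀ j, 0 ≤ a j := fun j => by positivity
  have hprod : ∏ j ∈ range (k + 1), (u + j * h) =
      u ^ (k + 1) * ∏ j ∈ range (k + 1), (1 + a j) := by
    rw [← card_range (k + 1), ← prod_const, card_range, ← prod_mul_distrib]
    exact prod_congr rfl fun j _ => by simp only [a]; field_simp [hu.ne']
  have hsum : ∑ j ∈ range (k + 1), a j ≤ (k + 1) * k * h / u :=
    calc ∑ j ∈ range (k + 1), a j ≤ ∑ _j ∈ range (k + 1), k * h / u :=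
          sum_le_sum fun j hj => by
            have : (j : ℝ) ≤ k := by exact_mod_cast Nat.lt_succ_iff.mp (mem_range.mp hj)
            simp only [a]; gcongr
      _ = (k + 1) * k * h / u := by simp [mul_div_assoc, mul_assoc]
  have hlow := one_sub_sum_le_inv_prod_one_add (range (k + 1)) ha
  have hup : (∏ j ∈ range (k + 1), (1 + a j))⁻¹ ≤ 1 :=
    inv_le_one_of_one_le₀ (le_add_of_nonneg_right (sum_nonneg fun j _ => ha j) |>.trans
      (one_add_sum_le_prod_one_add _ ha))
  have hpow : 0 < (u ^ (k + 1))⁻¹ := by positivity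
  rw [hprod, mul_inv, ← mul_sub_one, abs_mul, abs_of_pos hpow, abs_sub_comm,
    abs_of_nonneg (by linarith), mul_comm]
  gcongr
  linarith

theorem abs_sum_inv_prod_add_mul_sub_sum_inv_pow_le {ι : Type*} [Fintype ι] (u : ι → ℝ)
    {r h : ℝ} (k : ℕ) (hr : 0 < r) (hh : 0 ≤ h) (hu : ∀ i, r ≤ u i) :
    |∑ i, (∏ j ∈ range (k + 1), (u i + j * h))⁻¹ - ∑ i, (u i ^ (k + 1))⁻¹| ≤
      (k + 1) * k * h / r * ∑ i, (u i ^ (k + 1))⁻¹ := by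
  rw [← sum_sub_distrib, mul_sum]
  refine (abs_sum_le_sum_abs _ _).trans (sum_le_sum fun i _ =>
    (abs_inv_prod_add_mul_sub_inv_pow_le k (hr.trans_le (hu i)) hh).trans ?_)
  have := hr.trans_le (hu i)
  gcongr
  exact hu i

theorem one_le_sum_inv_pow {ι : Type*} [Fintype ι] {u : ι → ℝ} (hu : ∀ i, 0 < u i) {i₀ : ι}
    (hi₀ : u i₀ ≤ 1) (m : ℕ) : 1 ≤ ∑ i, (u i ^ m)⁻¹ :=
  calc 1 ≤ (u i₀ ^ m)⁻¹ := (one_le_inv₀ (pow_pos (hu i₀) m)).mpr (pow_le_one₀ (hu i₀).le hi₀)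
    _ ≤ ∑ i, (u i ^ m)⁻¹ := single_le_sum (fun i _ => (inv_pos.mpr (pow_pos (hu i) m)).le)
        (mem_univ i₀)

theorem eps'_bounds {n k : ℕ} (hn : 1 ≤ n) {ε ε' : ℝ} (hε : ε ∈ Set.Ioc 0 (1 / 2))
    (hε' : ε' = ε / (8 * (n : ℝ) ^ ((1 : ℝ) / k))) : 0 < ε' ∧ ε' ≤ 1 / 16 := by
  have hroot : 1 ≤ (n : ℝ) ^ ((1 : ℝ) / k) :=
    Real.one_le_rpow (by exact_mod_cast hn) (by positivity)
  subst hε'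
  refine ⟨div_pos hε.1 (by positivity), ?_⟩
  rw [div_le_iff₀ (by positivity)]
  nlinarith [hε.2]

theorem delta_bounds {k : ℕ} (hk : 1 ≤ k) {ε' δ : ℝ} (hε'0 : 0 < ε') (hε'1 : ε' ≤ 1 / 16)
    (hδ : δ = ε' / (16 * (2 * Real.exp 1) ^ k * k)) :
    0 < δ ∧ δ ≤ 1 ∧ 2 ^ k * (δ ^ (k + 1) / 2) / (k.factorial * δ ^ k) ≤ 1 / 8 ∧
      (k + 1) * k * δ / ε' ≤ 1 / 8 := by
  have hk' : (1 : ℝ) ≤ k := by exact_mod_cast hk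
  have h2e : (2 : ℝ) ^ k ≤ (2 * Real.exp 1) ^ k :=
    pow_le_pow_left₀ zero_le_two (by linarith [Real.add_one_le_exp 1]) k
  have hδ0 : 0 < δ := by rw [hδ]; positivity
  have hδε' : 16 * 2 ^ k * k * δ ≤ ε' :=
    calc 16 * 2 ^ k * k * δ ≤ 16 * (2 * Real.exp 1) ^ k * k * δ := by gcongr
      _ = ε' := by rw [hδ]; field_simp
  have h2kδ : 2 ^ k * δ ≤ 1 / 256 := by
    nlinarith [mul_le_mul_of_nonneg_left hk' (by positivity : (0 : ℝ) ≤ 2 ^ k * δ)]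
  have h2k : (k : ℝ) + 1 ≤ 2 ^ k := by exact_mod_cast Nat.lt_two_pow_self
  have hkf : (1 : ℝ) ≤ k.factorial := by exact_mod_cast k.factorial_pos
  refine ⟨hδ0, by nlinarith [one_le_pow₀ (M₀ := ℝ) one_le_two (n := k)], ?_, ?_⟩
  · rw [div_le_iff₀ (by positivity), pow_succ]
    nlinarith [mul_le_mul_of_nonneg_right h2kδ (by positivity : (0 : ℝ) ≤ δ ^ k),
      mul_le_mul_of_nonneg_right hkf (by positivity : (0 : ℝ) ≤ δ ^ k), pow_pos hδ0 k]
  · rw [div_le_iff₀ hε'0]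
    nlinarith [mul_le_mul_of_nonneg_right h2k (by positivity : (0 : ℝ) ≤ k * δ)]

theorem alpha_bounds {n k : ℕ} (hn : 1 ≤ n) {ε' δ δ' α : ℝ} (hε'0 : 0 < ε') (hε'1 : ε' ≤ 1)
    (hδ0 : 0 < δ) (hδ1 : δ ≤ 1) (hδ' : δ' = δ ^ (k + 1))
    (hα : α = δ' * ε' ^ 2 / (2 * (n : ℝ) ^ 2)) :
    0 < α ∧ n * α ≤ ε' ∧ n ^ 2 * α / ε' ^ 2 = δ ^ (k + 1) / 2 := by
  have hn' : (1 : ℝ) ≤ n := by exact_mod_cast hn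
  have hδk : δ ^ (k + 1) ≤ 1 := pow_le_one₀ hδ0.le hδ1
  subst hα hδ'
  refine ⟨by positivity, ?_, by field_simp⟩
  have : (n : ℝ) * (δ ^ (k + 1) * ε' ^ 2 / (2 * n ^ 2)) = δ ^ (k + 1) * ε' ^ 2 / (2 * n) := by
    field_simp
  rw [this, div_le_iff₀ (by positivity)]
  nlinarith [mul_le_mul_of_nonneg_right hδk (sq_nonneg ε')]

/-- Main Technical Lemma: the finite-difference approximation `g̃_{k+1}`
built from the forward-difference approximation `g̃₁` of `p'/p` satisfies
`|g̃_{k+1}(x) − g_{k+1}(x)| ≤ (1/4) g_{k+1}(x)` on `[λ₁ + ε', 1]`. -/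
theorem main_technical_lemma
    (n : ℕ) (hn : 2 ≤ n) (lam : Fin n → ℝ) (hlam : Antitone lam)
    (hroots : ∀ i, lam i ∈ Set.Icc (0 : ℝ) (1 / 2))
    (p : ℝ → ℝ) (hp : ∀ y : ℝ, p y = ∏ i, (y - lam i))
    (k : ℕ) (hk : 1 ≤ k) (ε : ℝ) (hε : ε ∈ Set.Ioc (0 : ℝ) (1 / 2))
    (ε' δ δ' α : ℝ)
    (hε' : ε' = ε / (8 * (n : ℝ) ^ ((1 : ℝ) / k)))
    (hδ : δ = ε' / (16 * (2 * Real.exp 1) ^ k * k))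
    (hδ' : δ' = δ ^ (k + 1))
    (hα : α = δ' * ε' ^ 2 / (2 * (n : ℝ) ^ 2))
    (g1t : ℝ → ℝ) (hg1t : ∀ y : ℝ, g1t y = (p (y + α) - p y) / (α * p y))
    (gt : ℝ → ℝ)
    (hgt : ∀ y : ℝ, gt y = ((-1 : ℝ) ^ k / ((k.factorial : ℝ) * δ ^ k)) *
        ∑ i ∈ Finset.range (k + 1),
          (-1 : ℝ) ^ i * (k.choose i : ℝ) * g1t (y + ((k - i : ℕ) : ℝ) * δ))
    (x : ℝ) (hx : x ∈ Set.Icc (lam ⟨0, by omega⟩ + ε') 1) :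
    |gt x - ∑ i, 1 / (x - lam i) ^ (k + 1)| ≤
      (1 / 4) * ∑ i, 1 / (x - lam i) ^ (k + 1) := by
  obtain ⟨hε'0, hε'1⟩ := eps'_bounds (by omega) hε hε'
  obtain ⟨hδ0, hδ1, hfd_le, hprod_le⟩ := delta_bounds hk hε'0 hε'1 hδ
  obtain ⟨hα0, hnα, hE⟩ := alpha_bounds (by omega) hε'0 (by linarith) hδ0 hδ1 hδ' hα
  have hgap : ∀ i, ε' ≤ x - lam i ∧ x - lam i ≤ 1 := fun i =>
    ⟨by linarith [hx.1, hlam (show (⟨0, by omega⟩ : Fin n) ≤ i from Nat.zero_le _)],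
      by linarith [hx.2, (hroots i).1]⟩
  have hpos : ∀ i, 0 < x - lam i := fun i => hε'0.trans_le (hgap i).1
  have hg1 : ∀ j ≤ k, |g1t (x + j * δ) - ∑ i, (x + j * δ - lam i)⁻¹| ≤ δ ^ (k + 1) / 2 := by
    intro j _
    have hjδ : 0 ≤ (j : ℝ) * δ := by positivity
    have := abs_fwdDiff_div_sub_sum_inv_le lam hp (y := x + j * δ) hε'0 hα0
      (fun i => by linarith [(hgap i).1]) (by rwa [Fintype.card_fin])
    rwa [Fintype.card_fin, hE, ← hg1t] at this
  have hfd := abs_fwdDiff_iter_div_sub_sum_inv_prod_le lam g1t k hδ0 hpos hg1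
  have hprod := abs_sum_inv_prod_add_mul_sub_sum_inv_pow_le (fun i => x - lam i) k hε'0 hδ0.le
    (fun i => (hgap i).1)
  have hone := one_le_sum_inv_pow hpos (hgap ⟨0, by omega⟩).2 (k + 1)
  rw [hgt, sum_alternating_choose_mul_shift_eq_fwdDiff_iter]
  simp only [one_div ((x - lam _) ^ (k + 1))]
  calc _ ≤ _ := abs_sub_le _ (∑ i, (∏ j ∈ range (k + 1), (x - lam i + j * δ))⁻¹) _
    _ ≤ 1 / 8 + 1 / 8 * ∑ i, ((x - lam i) ^ (k + 1))⁻¹ :=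
        add_le_add (hfd.trans hfd_le)
          (hprod.trans (mul_le_mul_of_nonneg_right hprod_le (zero_le_one.trans hone)))
    _ ≤ 1 / 4 * ∑ i, ((x - lam i) ^ (k + 1))⁻¹ := by linarith
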